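/- arXiv:2304.14197 — 5 statements merged into one kernel-verified Lean document; each statement's English description precedes it below -/
import Mathlib

section
/- Let n ≥ 1, β > 0, let A ∈ ℝ^{n×n} with A_{i,j} ∈ [0,1] for all i,j, and let z ∈ ℝⁿ with z_j ≥ 0 and Σ_j z_j ≤ β. Let C and D be qubit registers (ℂ²) and A, B be n-dimensional registers (ℂⁿ). Suppose U_z is a unitary on C⊗B with U_z (|0⟩_C |0⟩_B) = |0⟩_C Σ_{j=1}^n √(z_j/β) |j⟩_B + |1⟩_C |φ⟩_B for some vector |φ⟩_B, and suppose O'_A is a unitary on D⊗A⊗B with O'_A (|0⟩_D |i⟩_A |j⟩_B) = (√(A_{i,j}) |0⟩_D + √(1 − A_{i,j}) |1⟩_D) |i⟩_A |j⟩_B for all i, j ∈ [n]. Define V = (|0⟩⟨0|_C ⊗ O'_A + |1⟩⟨1|_C ⊗ I_{DAB}) (U_z ⊗ I_{DA}), acting on C⊗D⊗A⊗B. Then for every i ∈ [n], (⟨0|_C ⟨0|_D ⊗ I_{AB}) V (|0⟩_C |0⟩_D |i⟩_A |0⟩_B) = Σ_{j=1}^n √(A_{i,j} z_j / β) |i⟩_A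 |j⟩_B. In particular, writing u = A z, the squared norm of this vector is u_i/β, so V is a β-amplitude-encoding of the vector u. -/
/-!
With the control qubit `C` in `|0⟩`, `V` applies `O'_A` after `U_z`, so the `⟨0|_C ⟨0|_D` block
of `V |0⟩_C |0⟩_D |i⟩_A |0⟩_B` is the `⟨0|_D` part of `O'_A` applied to `|i⟩_A` tensored with the
`⟨0|_C` part `∑_j √(z_j/β) |j⟩_B` of `U_z |0⟩`. The oracle is diagonal in `(A, B)`, so this block
is `|i⟩_A ∑_j √(A_{ij}) √(z_j/β) |j⟩_B`, whose squared norm is `∑_j A_{ij} z_j / β = (Az)_i / β`.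
-/

open Finset Matrix

namespace Matrix

variable {ι κ R : Type*} [Fintype ι] [DecidableEq ι] [NonAssocSemiring R]

theorem mulVec_indicator_apply (M : Matrix κ ι R) (j : ι) (i : κ) :
    M.mulVec (fun q => if q = j then 1 else 0) i = M i j := by
  rw [show (fun q => if q = j then (1 : R) else 0) = Pi.single j 1 from
    funext fun q => (Pi.single_apply j 1 q).symm, mulVec_single_one, col_apply]

end Matrix

section ControlledCircuit

variable {δ α κ R : Type*} [Fintype δ] [Fintype α] [Fintype κ]
  [DecidableEq δ] [DecidableEq α] [DecidableEq κ] [Semiring R]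

/-- `|0⟩⟨0|_C ⊗ O + |1⟩⟨1|_C ⊗ I` on `C ⊗ (D ⊗ A ⊗ B)`. -/
def controlledOnZero (O : Matrix (δ × α × κ) (δ × α × κ) R) :
    Matrix (Fin 2 × δ × α × κ) (Fin 2 × δ × α × κ) R :=
  Matrix.of fun p q =>
    (if p.1 = 0 ∧ q.1 = 0 then O p.2 q.2 else 0) + (if p.1 = 1 ∧ q.1 = 1 ∧ p.2 = q.2 then 1 else 0)

/-- `U ⊗ I_{DA}` for `U` acting on `C ⊗ B`. -/
def tensorIdDA (U : Matrix (Fin 2 × κ) (Fin 2 × κ) R) :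
    Matrix (Fin 2 × δ × α × κ) (Fin 2 × δ × α × κ) R :=
  Matrix.of fun p q =>
    U (p.1, p.2.2.2) (q.1, q.2.2.2) * (if p.2.1 = q.2.1 ∧ p.2.2.1 = q.2.2.1 then 1 else 0)

theorem controlledOnZero_mul_tensorIdDA_apply_zero (O : Matrix (δ × α × κ) (δ × α × κ) R)
    (U : Matrix (Fin 2 × κ) (Fin 2 × κ) R) (d : δ) (a : α) (b : κ) (c' : Fin 2) (d' : δ) (a' : α)
    (b' : κ) :
    (controlledOnZero O * tensorIdDA (δ := δ) (α := α) U) (0, d, a, b) (c', d', a', b') =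
      ∑ k, O (d, a, b) (d', a', k) * U (0, k) (c', b') := by
  simp [controlledOnZero, tensorIdDA, Matrix.mul_apply, Fintype.sum_prod_type, ite_and]

end ControlledCircuit

theorem sum_sum_norm_sq_ite_sqrt {ι : Type*} [Fintype ι] [DecidableEq ι] (i : ι) (w : ι → ℝ)
    (hw : ∀ b, 0 ≤ w b) :
    ∑ a, ∑ b, ‖if a = i then (Real.sqrt (w b) : ℂ) else 0‖ ^ 2 = ∑ b, w b := by
  simp [apply_ite, Complex.norm_real, Real.sq_sqrt (hw _)]

/-- Registers are ordered as `C ⊗ D ⊗ A ⊗ B`, with indices `(c, d, a, b)`. -/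
theorem stmt10_general (n : ℕ) [NeZero n] (β : ℝ) (hβ : 0 < β)
    (A : Matrix (Fin n) (Fin n) ℝ) (hA : ∀ i j, A i j ∈ Set.Icc (0 : ℝ) 1)
    (z : Fin n → ℝ) (hz : ∀ j, 0 ≤ z j)
    (Uz : Matrix (Fin 2 × Fin n) (Fin 2 × Fin n) ℂ)
    (φ : Fin n → ℂ)
    (hUz : ∀ c b, Uz.mulVec (fun q => if q = ((0 : Fin 2), (0 : Fin n)) then 1 else 0) (c, b) =
      if c = 0 then (Real.sqrt (z b / β) : ℂ) else φ b)
    (OA : Matrix (Fin 2 × Fin n × Fin n) (Fin 2 × Fin n × Fin n) ℂ)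
    (hOA : ∀ i j d a b,
      OA.mulVec (fun q => if q = ((0 : Fin 2), i, j) then 1 else 0) (d, a, b) =
        if a = i ∧ b = j then
          (if d = 0 then (Real.sqrt (A i j) : ℂ) else (Real.sqrt (1 - A i j) : ℂ))
        else 0)
    (V : Matrix (Fin 2 × Fin 2 × Fin n × Fin n) (Fin 2 × Fin 2 × Fin n × Fin n) ℂ)
    (hV : V = (Matrix.of fun p q =>
        (if p.1 = 0 ∧ q.1 = 0 then OA p.2 q.2 else 0) +
        (if p.1 = 1 ∧ q.1 = 1 ∧ p.2 = q.2 then 1 else 0)) *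
      (Matrix.of fun p q =>
        Uz (p.1, p.2.2.2) (q.1, q.2.2.2) *
          (if p.2.1 = q.2.1 ∧ p.2.2.1 = q.2.2.1 then 1 else 0))) :
    ∀ i : Fin n,
      (∀ a b : Fin n,
        V.mulVec (fun q => if q = ((0 : Fin 2), (0 : Fin 2), i, (0 : Fin n)) then 1 else 0)
            (0, 0, a, b) =
          if a = i then (Real.sqrt (A i b * z b / β) : ℂ) else 0) ∧
      (∑ a : Fin n, ∑ b : Fin n,
        ‖V.mulVec (fun q => if q = ((0 : Fin 2), (0 : Fin 2), i, (0 : Fin n)) then 1 else 0)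
            (0, 0, a, b)‖ ^ 2) = A.mulVec z i / β := by
  intro i
  simp only [mulVec_indicator_apply] at hUz hOA ⊢
  have hV_zero_block : ∀ a b, V (0, 0, a, b) (0, 0, i, 0) =
      if a = i then (Real.sqrt (A i b * z b / β) : ℂ) else 0 := by
    intro a b
    rw [hV]
    refine (controlledOnZero_mul_tensorIdDA_apply_zero OA Uz _ _ _ _ _ _ _).trans ?_
    split_ifs with hai
    · subst hai
      simp [hOA, hUz, mul_div_assoc, Real.sqrt_mul (hA a b).1]
    · simp [hOA, hai]
  refine ⟨hV_zero_block, ?_⟩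
  simp only [hV_zero_block]
  rw [sum_sum_norm_sq_ite_sqrt i _ fun b => div_nonneg (mul_nonneg (hA i b).1 (hz b)) hβ.le,
    ← sum_div]
  rfl

/-- The unitary `V = (|0⟩⟨0|_C ⊗ O'_A + |1⟩⟨1|_C ⊗ I_{DAB})(U_z ⊗ I_{DA})` built from a
state-preparation unitary `U_z` for `z/β` and the entry oracle `O'_A` of `A` maps
`|0⟩_C|0⟩_D|i⟩_A|0⟩_B` to `∑_j √(A_{ij} z_j/β)|i⟩_A|j⟩_B` on the `⟨0|_C⟨0|_D` block;
in particular the squared norm of this block is `(Az)_i/β`, so `V` is a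
`β`-amplitude-encoding of `u = Az`.  Registers are ordered as `C ⊗ D ⊗ A ⊗ B`, with
indices `(c, d, a, b)`. -/
theorem stmt10 (n : ℕ) [NeZero n] (β : ℝ) (hβ : 0 < β)
    (A : Matrix (Fin n) (Fin n) ℝ) (hA : ∀ i j, A i j ∈ Set.Icc (0 : ℝ) 1)
    (z : Fin n → ℝ) (hz : ∀ j, 0 ≤ z j) (hz1 : ∑ j, z j ≤ β)
    (Uz : Matrix (Fin 2 × Fin n) (Fin 2 × Fin n) ℂ)
    (hUzU : Uz ∈ Matrix.unitaryGroup (Fin 2 × Fin n) ℂ)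
    (φ : Fin n → ℂ)
    (hUz : ∀ c b, Uz.mulVec (fun q => if q = ((0 : Fin 2), (0 : Fin n)) then 1 else 0) (c, b) =
      if c = 0 then (Real.sqrt (z b / β) : ℂ) else φ b)
    (OA : Matrix (Fin 2 × Fin n × Fin n) (Fin 2 × Fin n × Fin n) ℂ)
    (hOAU : OA ∈ Matrix.unitaryGroup (Fin 2 × Fin n × Fin n) ℂ)
    (hOA : ∀ i j d a b,
      OA.mulVec (fun q => if q = ((0 : Fin 2), i, j) then 1 else 0) (d, a, b) =
        if a = i ∧ b = j then
          (if d = 0 then (Real.sqrt (A i j) : ℂ) else (Real.sqrt (1 - A i j) : ℂ))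
        else 0)
    (V : Matrix (Fin 2 × Fin 2 × Fin n × Fin n) (Fin 2 × Fin 2 × Fin n × Fin n) ℂ)
    (hV : V = (Matrix.of fun p q =>
        (if p.1 = 0 ∧ q.1 = 0 then OA p.2 q.2 else 0) +
        (if p.1 = 1 ∧ q.1 = 1 ∧ p.2 = q.2 then 1 else 0)) *
      (Matrix.of fun p q =>
        Uz (p.1, p.2.2.2) (q.1, q.2.2.2) *
          (if p.2.1 = q.2.1 ∧ p.2.2.1 = q.2.2.1 then 1 else 0))) :
    ∀ i : Fin n,
      (∀ a b : Fin n,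
        V.mulVec (fun q => if q = ((0 : Fin 2), (0 : Fin 2), i, (0 : Fin n)) then 1 else 0)
            (0, 0, a, b) =
          if a = i then (Real.sqrt (A i b * z b / β) : ℂ) else 0) ∧
      (∑ a : Fin n, ∑ b : Fin n,
        ‖V.mulVec (fun q => if q = ((0 : Fin 2), (0 : Fin 2), i, (0 : Fin n)) then 1 else 0)
            (0, 0, a, b)‖ ^ 2) = A.mulVec z i / β :=
  stmt10_general n β hβ A hA z hz Uz φ hUz OA hOA V hV
end

section
/- Let u ∈ ℝⁿ with u_i ≥ 0 and β > 0, and let V be a unitary on registers C⊗A⊗B (C = ℂ², A = ℂⁿ, B = ℂ^d) such that ⟨0|_C V (|0⟩_C |i⟩_A |0⟩_B) = √(u_i/β) |i⟩_A |ψ_i⟩_B for some unit vectors |ψ_i⟩_B, for all i ∈ [n]. Introduce a second qubit register D and define U_u = (V†_{CAB} ⊗ I_D)(V_{DAB} ⊗ I_C) on C⊗D⊗A⊗B, where V_{DAB} denotes V acting on registers D, A, B and V†_{CAB} denotes V† acting on registers C, A, B. Then for all i, j ∈ [n], ⟨0|_C ⟨0|_D ⟨j|_A ⟨0|_B U_u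 (|0⟩_C |0⟩_D |i⟩_A |0⟩_B) = δ_{ij} · u_i/β. That is, U_u is a (1,0)-block-encoding of diag(u)/β. -/
open Finset Matrix

/-!
The two copies of `V` meet only through the `A ⊗ B` registers: with `C` and `D` both in `|0⟩`
at input and output, the entry of `U_u` is `⟨w_j, w_i⟩`, where `w_k = ⟨0|_C V |0⟩_C|k⟩_A|0⟩_B`.
By the encoding, `w_k = √(u_k/β) |k⟩_A|ψ_k⟩_B`; these vectors have disjoint `A`-support, hence
are orthogonal for `j ≠ i`, and `‖w_i‖² = u_i/β` because `ψ_i` is a unit vector.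
-/

theorem Matrix.mulVec_indicator_apply_s11 {m n R : Type*} [Fintype n] [DecidableEq n]
    [NonAssocSemiring R] (M : Matrix m n R) (k : n) (p : m) :
    M.mulVec (fun q => if q = k then 1 else 0) p = M p k := by
  simp [mulVec, dotProduct]

section Registers

variable {κ X R : Type*} [Fintype κ] [DecidableEq κ] [Fintype X] [NonAssocSemiring R]

/-- On registers ordered `(c, d, x)`, `onFirstAndLast W = W_{CX} ⊗ I_D` and
`onLastTwo W = W_{DX} ⊗ I_C`. -/
def onFirstAndLast (W : Matrix (κ × X) (κ × X) R) : Matrix (κ × κ × X) (κ × κ × X) R :=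
  of fun p q => (if p.2.1 = q.2.1 then 1 else 0) * W (p.1, p.2.2) (q.1, q.2.2)

def onLastTwo (W : Matrix (κ × X) (κ × X) R) : Matrix (κ × κ × X) (κ × κ × X) R :=
  of fun p q => (if p.1 = q.1 then 1 else 0) * W (p.2.1, p.2.2) (q.2.1, q.2.2)

theorem onFirstAndLast_mul_onLastTwo_apply (W V : Matrix (κ × X) (κ × X) R)
    (c d c' d' : κ) (y x : X) :
    (onFirstAndLast W * onLastTwo V) (c, d, y) (c', d', x) =
      ∑ z, W (c, y) (c', z) * V (d, z) (d', x) := by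
  simp [onFirstAndLast, onLastTwo, mul_apply, Fintype.sum_prod_type, ite_mul, mul_ite,
    sum_ite_irrel]

end Registers

theorem sum_star_mul_of_blockSupported {ι β R : Type*} [Fintype ι] [DecidableEq ι] [Fintype β]
    [Semiring R] [StarRing R] (φ : ι → β → R) (i j : ι) :
    ∑ z : ι × β, star (if z.1 = j then φ j z.2 else 0) * (if z.1 = i then φ i z.2 else 0) =
      if j = i then ∑ b, star (φ i b) * φ i b else 0 := by
  rw [Fintype.sum_prod_type]
  split_ifs with hji
  · subst hji
    simp
  · refine sum_eq_zero fun a _ => sum_eq_zero fun b _ => ?_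
    by_cases ha : a = j
    · simp [ha, hji]
    · simp [ha]

theorem sum_star_mul_self_sqrt_mul_of_unit {β : Type*} [Fintype β] {t : ℝ} (ht : 0 ≤ t)
    (ψ : β → ℂ) (hψ : ∑ b, ‖ψ b‖ ^ 2 = 1) :
    ∑ b, star ((Real.sqrt t : ℂ) * ψ b) * ((Real.sqrt t : ℂ) * ψ b) = t := by
  have hstar (b : β) : star ((Real.sqrt t : ℂ) * ψ b) * ((Real.sqrt t : ℂ) * ψ b) =
      (t : ℂ) * (‖ψ b‖ ^ 2 : ℝ) := by
    rw [star_mul', Complex.star_def, Complex.conj_ofReal, mul_mul_mul_comm, ← Complex.ofReal_mul,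
      Real.mul_self_sqrt ht, Complex.conj_mul', Complex.ofReal_pow]
  simp only [hstar, ← mul_sum, ← Complex.ofReal_sum, hψ, Complex.ofReal_one, mul_one]

theorem stmt11_general (n d : ℕ) [NeZero d] (β : ℝ) (hβ : 0 < β)
    (u : Fin n → ℝ) (hu : ∀ i, 0 ≤ u i)
    (V : Matrix (Fin 2 × Fin n × Fin d) (Fin 2 × Fin n × Fin d) ℂ)
    (ψ : Fin n → Fin d → ℂ) (hψ : ∀ i, ∑ b, ‖ψ i b‖ ^ 2 = 1)
    (hV : ∀ i a b,
      V.mulVec (fun q => if q = ((0 : Fin 2), i, (0 : Fin d)) then 1 else 0) (0, a, b) =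
        if a = i then (Real.sqrt (u i / β) : ℂ) * ψ i b else 0)
    (Uu : Matrix (Fin 2 × Fin 2 × Fin n × Fin d) (Fin 2 × Fin 2 × Fin n × Fin d) ℂ)
    (hUu : Uu = (Matrix.of fun p q =>
        (if p.2.1 = q.2.1 then 1 else 0) * Vᴴ (p.1, p.2.2) (q.1, q.2.2)) *
      (Matrix.of fun p q =>
        (if p.1 = q.1 then 1 else 0) * V (p.2.1, p.2.2) (q.2.1, q.2.2))) :
    ∀ i j : Fin n,
      Uu.mulVec (fun q => if q = ((0 : Fin 2), (0 : Fin 2), i, (0 : Fin d)) then 1 else 0)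
          (0, 0, j, 0) =
        if j = i then ((u i / β : ℝ) : ℂ) else 0 := by
  intro i j
  have hcol (k : Fin n) (z : Fin n × Fin d) : V (0, z) (0, k, 0) =
      if z.1 = k then (Real.sqrt (u k / β) : ℂ) * ψ k z.2 else 0 := by
    simpa only [mulVec_indicator_apply_s11] using hV k z.1 z.2
  rw [mulVec_indicator_apply_s11, hUu]
  change (onFirstAndLast Vᴴ * onLastTwo V) (0, 0, j, 0) (0, 0, i, 0) = _
  rw [onFirstAndLast_mul_onLastTwo_apply]
  simp only [conjTranspose_apply, hcol]
  rw [sum_star_mul_of_blockSupported (fun k b => (Real.sqrt (u k / β) : ℂ) * ψ k b)]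
  split_ifs
  · exact sum_star_mul_self_sqrt_mul_of_unit (div_nonneg (hu i) hβ.le) (ψ i) (hψ i)
  · rfl

/-- If `V` on `C ⊗ A ⊗ B` is a `β`-amplitude-encoding of a nonnegative vector `u`
(i.e. `⟨0|_C V|0⟩_C|i⟩_A|0⟩_B = √(u_i/β)|i⟩_A|ψ_i⟩_B` for unit vectors `ψ_i`), then
`U_u = (V†_{CAB} ⊗ I_D)(V_{DAB} ⊗ I_C)` on `C ⊗ D ⊗ A ⊗ B` satisfies
`⟨0|_C⟨0|_D⟨j|_A⟨0|_B U_u |0⟩_C|0⟩_D|i⟩_A|0⟩_B = δ_{ij} u_i/β`, i.e. it is a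
`(1,0)`-block-encoding of `diag(u)/β`.  Indices are ordered `(c, d, a, b)`. -/
theorem stmt11 (n d : ℕ) [NeZero n] [NeZero d] (β : ℝ) (hβ : 0 < β)
    (u : Fin n → ℝ) (hu : ∀ i, 0 ≤ u i)
    (V : Matrix (Fin 2 × Fin n × Fin d) (Fin 2 × Fin n × Fin d) ℂ)
    (hVU : V ∈ Matrix.unitaryGroup (Fin 2 × Fin n × Fin d) ℂ)
    (ψ : Fin n → Fin d → ℂ) (hψ : ∀ i, ∑ b, ‖ψ i b‖ ^ 2 = 1)
    (hV : ∀ i a b,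
      V.mulVec (fun q => if q = ((0 : Fin 2), i, (0 : Fin d)) then 1 else 0) (0, a, b) =
        if a = i then (Real.sqrt (u i / β) : ℂ) * ψ i b else 0)
    (Uu : Matrix (Fin 2 × Fin 2 × Fin n × Fin d) (Fin 2 × Fin 2 × Fin n × Fin d) ℂ)
    (hUu : Uu = (Matrix.of fun p q =>
        (if p.2.1 = q.2.1 then 1 else 0) * Vᴴ (p.1, p.2.2) (q.1, q.2.2)) *
      (Matrix.of fun p q =>
        (if p.1 = q.1 then 1 else 0) * V (p.2.1, p.2.2) (q.2.1, q.2.2))) :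
    ∀ i j : Fin n,
      Uu.mulVec (fun q => if q = ((0 : Fin 2), (0 : Fin 2), i, (0 : Fin d)) then 1 else 0)
          (0, 0, j, 0) =
        if j = i then ((u i / β : ℝ) : ℂ) else 0 :=
  stmt11_general n d β hβ u hu V ψ hψ hV Uu hUu
end

section
/- Let n ≥ k ≥ 1 be integers, c ≥ 0 a real number, u ∈ ℝⁿ, and S ⊆ [n] with |S| = k. Suppose ũ_i (for i ∈ S) are real numbers with ũ_i ≤ u_i + c for all i ∈ S, and set ũ* = min_{i ∈ S} ũ_i, W = (n − k)·exp(ũ*) + Σ_{i ∈ S} exp(ũ_i), and E = Σ_{i=1}^n exp(u_i). Then E/W ≥ (k/n)·exp(−c). -/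
/-!
Since `ũ* ≤ ũ_i` on `S`, we get `k exp ũ* ≤ T := ∑_{i∈S} exp ũ_i`, hence `W ≤ (n/k) T`.
On the other hand `exp(-c) T ≤ ∑_{i∈S} exp u_i ≤ E`.
-/

open Finset

lemma sub_mul_add_le_div_mul {k n a T : ℝ} (hk : 0 < k) (hkn : k ≤ n) (ha : k * a ≤ T) :
    (n - k) * a + T ≤ n / k * T := by
  rw [div_mul_eq_mul_div, le_div_iff₀ hk]
  nlinarith

lemma card_mul_exp_inf'_le_sum_exp {ι : Type*} (S : Finset ι) (hS : S.Nonempty) (f : ι → ℝ) :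
    (S.card : ℝ) * Real.exp (S.inf' hS f) ≤ ∑ i ∈ S, Real.exp (f i) := by
  rw [← nsmul_eq_mul]
  exact card_nsmul_le_sum _ _ _ fun i hi => Real.exp_le_exp.mpr (inf'_le f hi)

lemma exp_neg_mul_sum_exp_le {ι : Type*} (S : Finset ι) {u v : ι → ℝ} {c : ℝ}
    (h : ∀ i ∈ S, v i ≤ u i + c) :
    Real.exp (-c) * ∑ i ∈ S, Real.exp (v i) ≤ ∑ i ∈ S, Real.exp (u i) := by
  rw [mul_sum]
  refine sum_le_sum fun i hi => ?_
  rw [← Real.exp_add, Real.exp_le_exp]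
  linarith [h i hi]

theorem card_div_card_mul_exp_neg_le_sum_exp_div {ι : Type*} [Fintype ι]
    (S : Finset ι) (hS : S.Nonempty) (u v : ι → ℝ) (c : ℝ) (h : ∀ i ∈ S, v i ≤ u i + c) :
    (S.card : ℝ) / Fintype.card ι * Real.exp (-c) ≤
      (∑ i, Real.exp (u i)) /
        (((Fintype.card ι : ℝ) - S.card) * Real.exp (S.inf' hS v) + ∑ i ∈ S, Real.exp (v i)) := by
  set n : ℝ := (Fintype.card ι : ℝ)
  set k : ℝ := (S.card : ℝ)
  set T := ∑ i ∈ S, Real.exp (v i)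
  have hk : 0 < k := by simpa [k] using hS.card_pos
  have hkn : k ≤ n := Nat.cast_le.mpr S.card_le_univ
  have hn : 0 < n := hk.trans_le hkn
  have hT : 0 < T := sum_pos (fun i _ => Real.exp_pos _) hS
  have hW : 0 < (n - k) * Real.exp (S.inf' hS v) + T := by
    have := mul_nonneg (sub_nonneg.mpr hkn) (Real.exp_pos (S.inf' hS v)).le
    linarith
  rw [le_div_iff₀ hW]
  calc k / n * Real.exp (-c) * ((n - k) * Real.exp (S.inf' hS v) + T)
      ≤ k / n * Real.exp (-c) * (n / k * T) := by
        gcongr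
        exact sub_mul_add_le_div_mul hk hkn (card_mul_exp_inf'_le_sum_exp S hS v)
    _ = Real.exp (-c) * T := by field_simp
    _ ≤ ∑ i ∈ S, Real.exp (u i) := exp_neg_mul_sum_exp_le S h
    _ ≤ ∑ i, Real.exp (u i) :=
        sum_le_sum_of_subset_of_nonneg (subset_univ S) fun i _ _ => (Real.exp_pos _).le

theorem stmt12_general (n k : ℕ)
    (c : ℝ)
    (u : Fin n → ℝ) (S : Finset (Fin n)) (hS : S.card = k) (hSne : S.Nonempty)
    (ut : Fin n → ℝ) (hut : ∀ i ∈ S, ut i ≤ u i + c)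
    (ustar : ℝ) (hustar : ustar = S.inf' hSne ut)
    (W : ℝ) (hW : W = ((n : ℝ) - k) * Real.exp ustar + ∑ i ∈ S, Real.exp (ut i))
    (E : ℝ) (hE : E = ∑ i, Real.exp (u i)) :
    (k : ℝ) / n * Real.exp (-c) ≤ E / W := by
  subst hS hustar hW hE
  simpa using card_div_card_mul_exp_neg_le_sum_exp_div S hSne u ut c hut

/-- If `ũ_i ≤ u_i + c` on `S` (with `|S| = k`), `ũ* = min_{i∈S} ũ_i`,
`W = (n-k)exp(ũ*) + ∑_{i∈S} exp(ũ_i)` and `E = ∑_i exp(u_i)`, then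
`E/W ≥ (k/n)·exp(-c)`. -/
theorem stmt12 (n k : ℕ) (hk : 1 ≤ k) (hkn : k ≤ n)
    (c : ℝ) (hc : 0 ≤ c)
    (u : Fin n → ℝ) (S : Finset (Fin n)) (hS : S.card = k) (hSne : S.Nonempty)
    (ut : Fin n → ℝ) (hut : ∀ i ∈ S, ut i ≤ u i + c)
    (ustar : ℝ) (hustar : ustar = S.inf' hSne ut)
    (W : ℝ) (hW : W = ((n : ℝ) - k) * Real.exp ustar + ∑ i ∈ S, Real.exp (ut i))
    (E : ℝ) (hE : E = ∑ i, Real.exp (u i)) :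
    (k : ℝ) / n * Real.exp (-c) ≤ E / W :=
  stmt12_general n k c u S hS hSne ut hut ustar hustar W hW E hE
end

section
/- Let n ≥ k ≥ 1, β ≥ 1, ε_P ∈ (0, 1/2), and let P be a real polynomial with |P(x)| ≤ 1 for x ∈ [−1, 1] and |P(x) − (1/4)·exp(2βx)| ≤ ε_P for all x ∈ [−1, 0]. Let u ∈ ℝⁿ, S ⊆ [n] with |S| = k, and real numbers ũ_i (i ∈ S) with 0 ≤ ũ_i − u_i ≤ 4β for all i ∈ S; set ũ* = min_{i ∈ S} ũ_i and assume 0 ≤ ũ* − u_i ≤ 4β for all i ∉ S. Let W = (n − k)·exp(ũ*) + Σ_{i ∈ S} exp(ũ_i) and E = Σ_{i=1}^n exp(u_i). Define N = Σ_{i ∈ S} P((u_i − ũ_i)/(4β))² · exp(ũ_i)/W + Σ_{i ∉ S} P((u_i − ũ*)/(4β))² · exp(ũ*)/W. Then E/(16W) − 2ε_P ≤ N ≤ E/(16W) + 3ε_P. -/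
/-!
Write `N - E/(16W)` as `(1/W) ∑ᵢ (P(xᵢ)² - e^{4βxᵢ}/16) e^{rᵢ}`, where `rᵢ` is `ũᵢ` on `S` and
`ũ*` off `S`, and `xᵢ = (uᵢ - rᵢ)/(4β) ∈ [-1, 0]`, using `e^{4βxᵢ} e^{rᵢ} = e^{uᵢ}`. Since
`P(x)² - a² = (P(x) - a)(P(x) + a)` with `a = e^{2βx}/4 ≤ 1/4` and `|P(x) + a| ≤ 1`, each bracket is
at most `ε_P` in absolute value, and the weights `e^{rᵢ}/W` sum to `1`, so `|N - E/(16W)| ≤ ε_P`.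
-/

open Finset Real

theorem abs_sq_sub_sq_le_of_abs_le_one {p a e : ℝ} (hp : |p| ≤ 1) (hpa : |p - a| ≤ e)
    (ha : 0 ≤ a) (hae : 2 * a + e ≤ 1) : |p ^ 2 - a ^ 2| ≤ e := by
  have hsum : |p + a| ≤ 1 := by
    rw [abs_le] at hp hpa ⊢
    constructor <;> linarith
  calc |p ^ 2 - a ^ 2| = |p - a| * |p + a| := by rw [← abs_mul]; ring_nf
    _ ≤ e * 1 := mul_le_mul hpa hsum (abs_nonneg _) ((abs_nonneg _).trans hpa)
    _ = e := mul_one e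

section ExpApprox

variable {f : ℝ → ℝ} {β ε : ℝ}

theorem abs_sq_mul_exp_sub_exp_le (hβ : 0 < β) (hε : ε ≤ 1 / 2)
    (hf1 : ∀ x ∈ Set.Icc (-1 : ℝ) 0, |f x| ≤ 1)
    (hf2 : ∀ x ∈ Set.Icc (-1 : ℝ) 0, |f x - 1 / 4 * exp (2 * β * x)| ≤ ε)
    {u r : ℝ} (hur : 0 ≤ r - u ∧ r - u ≤ 4 * β) :
    |f ((u - r) / (4 * β)) ^ 2 * exp r - exp u / 16| ≤ ε * exp r := by
  set x := (u - r) / (4 * β)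
  have hx : x ∈ Set.Icc (-1 : ℝ) 0 := by
    constructor
    · rw [le_div_iff₀ (by positivity)]; linarith
    · exact div_nonpos_of_nonpos_of_nonneg (by linarith) (by linarith)
  have hexp : exp (2 * β * x) ≤ 1 := exp_le_one_iff.2 (by nlinarith [hx.2])
  have hsq : (1 / 4 * exp (2 * β * x)) ^ 2 * exp r = exp u / 16 := by
    have hu : 2 * β * x + 2 * β * x + r = u := by
      simp only [x]
      field_simp
      ring
    rw [← hu, exp_add, exp_add]
    ring
  rw [← hsq, ← sub_mul, abs_mul, abs_of_pos (exp_pos r)]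
  gcongr
  exact abs_sq_sub_sq_le_of_abs_le_one (hf1 x hx) (hf2 x hx) (by positivity) (by linarith)

theorem abs_sum_sq_mul_exp_div_sub_sum_exp_div_le {ι : Type*} (s : Finset ι) (u r : ι → ℝ)
    {W : ℝ} (hW : 0 < W) (hβ : 0 < β) (hε : ε ≤ 1 / 2)
    (hf1 : ∀ x ∈ Set.Icc (-1 : ℝ) 0, |f x| ≤ 1)
    (hf2 : ∀ x ∈ Set.Icc (-1 : ℝ) 0, |f x - 1 / 4 * exp (2 * β * x)| ≤ ε)
    (hur : ∀ i ∈ s, 0 ≤ r i - u i ∧ r i - u i ≤ 4 * β) :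
    |∑ i ∈ s, f ((u i - r i) / (4 * β)) ^ 2 * exp (r i) / W - ∑ i ∈ s, exp (u i) / (16 * W)|
      ≤ ε * ∑ i ∈ s, exp (r i) / W := by
  rw [← sum_sub_distrib, mul_sum]
  refine (abs_sum_le_sum_abs _ _).trans (sum_le_sum fun i hi => ?_)
  rw [← div_div _ (16 : ℝ) W, ← sub_div, abs_div, abs_of_pos hW, ← mul_div_assoc]
  exact div_le_div_of_nonneg_right (abs_sq_mul_exp_sub_exp_le hβ hε hf1 hf2 (hur i hi)) hW.le

end ExpApprox

theorem stmt13_general (n k : ℕ) (hkn : k ≤ n)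
    (β : ℝ) (hβ : 1 ≤ β)
    (εP : ℝ) (hεP : εP ∈ Set.Ioo (0 : ℝ) (1 / 2))
    (P : Polynomial ℝ)
    (hP1 : ∀ x ∈ Set.Icc (-1 : ℝ) 1, |P.eval x| ≤ 1)
    (hP2 : ∀ x ∈ Set.Icc (-1 : ℝ) 0, |P.eval x - 1 / 4 * Real.exp (2 * β * x)| ≤ εP)
    (u : Fin n → ℝ) (S : Finset (Fin n)) (hS : S.card = k) (hSne : S.Nonempty)
    (ut : Fin n → ℝ) (hut : ∀ i ∈ S, 0 ≤ ut i - u i ∧ ut i - u i ≤ 4 * β)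
    (ustar : ℝ)
    (hout : ∀ i ∉ S, 0 ≤ ustar - u i ∧ ustar - u i ≤ 4 * β)
    (W : ℝ) (hW : W = ((n : ℝ) - k) * Real.exp ustar + ∑ i ∈ S, Real.exp (ut i))
    (E : ℝ) (hE : E = ∑ i, Real.exp (u i))
    (N : ℝ) (hN : N = (∑ i ∈ S, (P.eval ((u i - ut i) / (4 * β))) ^ 2 * Real.exp (ut i) / W)
      + ∑ i ∈ Sᶜ, (P.eval ((u i - ustar) / (4 * β))) ^ 2 * Real.exp ustar / W) :
    E / (16 * W) - 2 * εP ≤ N ∧ N ≤ E / (16 * W) + 3 * εP := by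
  have hβ0 : 0 < β := by linarith
  have hP1' : ∀ x ∈ Set.Icc (-1 : ℝ) 0, |P.eval x| ≤ 1 :=
    fun x hx => hP1 x ⟨hx.1, hx.2.trans zero_le_one⟩
  have hW' : W = ∑ i ∈ S, exp (ut i) + ∑ _i ∈ Sᶜ, exp ustar := by
    rw [hW, sum_const, card_compl, hS, Fintype.card_fin, nsmul_eq_mul, Nat.cast_sub hkn]
    ring
  have hWpos : 0 < W := by
    rw [hW']
    exact add_pos_of_pos_of_nonneg (sum_pos (fun i _ => exp_pos _) hSne)
      (sum_nonneg fun i _ => (exp_pos _).le)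
  have hS_err := abs_sum_sq_mul_exp_div_sub_sum_exp_div_le S u ut hWpos hβ0 hεP.2.le hP1' hP2 hut
  have hSc_err := abs_sum_sq_mul_exp_div_sub_sum_exp_div_le Sᶜ u (fun _ => ustar) hWpos hβ0
    hεP.2.le hP1' hP2 fun i hi => hout i (mem_compl.1 hi)
  have hE' : E / (16 * W) = ∑ i ∈ S, exp (u i) / (16 * W) + ∑ i ∈ Sᶜ, exp (u i) / (16 * W) := by
    rw [hE, ← sum_add_sum_compl S, add_div, sum_div, sum_div]
  have hdiff : |N - E / (16 * W)| ≤ εP := by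
    rw [hN, hE', add_sub_add_comm]
    calc _ ≤ εP * ∑ i ∈ S, exp (ut i) / W + εP * ∑ _i ∈ Sᶜ, exp ustar / W :=
          (abs_add_le _ _).trans (add_le_add hS_err hSc_err)
      _ = εP := by rw [← mul_add, ← sum_div, ← sum_div, ← add_div, ← hW', div_self hWpos.ne',
          mul_one]
  rw [abs_le] at hdiff
  constructor <;> linarith [hdiff.1, hdiff.2, hεP.1]

/-- Bounds on the squared norm `N` of the unnormalized post-selected state in the quantum
multi-Gibbs sampler: `E/(16W) - 2ε_P ≤ N ≤ E/(16W) + 3ε_P`. -/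
theorem stmt13 (n k : ℕ) (hk : 1 ≤ k) (hkn : k ≤ n)
    (β : ℝ) (hβ : 1 ≤ β)
    (εP : ℝ) (hεP : εP ∈ Set.Ioo (0 : ℝ) (1 / 2))
    (P : Polynomial ℝ)
    (hP1 : ∀ x ∈ Set.Icc (-1 : ℝ) 1, |P.eval x| ≤ 1)
    (hP2 : ∀ x ∈ Set.Icc (-1 : ℝ) 0, |P.eval x - 1 / 4 * Real.exp (2 * β * x)| ≤ εP)
    (u : Fin n → ℝ) (S : Finset (Fin n)) (hS : S.card = k) (hSne : S.Nonempty)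
    (ut : Fin n → ℝ) (hut : ∀ i ∈ S, 0 ≤ ut i - u i ∧ ut i - u i ≤ 4 * β)
    (ustar : ℝ) (hustar : ustar = S.inf' hSne ut)
    (hout : ∀ i ∉ S, 0 ≤ ustar - u i ∧ ustar - u i ≤ 4 * β)
    (W : ℝ) (hW : W = ((n : ℝ) - k) * Real.exp ustar + ∑ i ∈ S, Real.exp (ut i))
    (E : ℝ) (hE : E = ∑ i, Real.exp (u i))
    (N : ℝ) (hN : N = (∑ i ∈ S, (P.eval ((u i - ut i) / (4 * β))) ^ 2 * Real.exp (ut i) / W)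
      + ∑ i ∈ Sᶜ, (P.eval ((u i - ustar) / (4 * β))) ^ 2 * Real.exp ustar / W) :
    E / (16 * W) - 2 * εP ≤ N ∧ N ≤ E / (16 * W) + 3 * εP :=
  stmt13_general n k hkn β hβ εP hεP P hP1 hP2 u S hS hSne ut hut ustar hout W hW E hE N hN
end

section
/- (Total variation error of the quantum multi-Gibbs sampler's output distribution.) Let n ≥ k ≥ 1, β ≥ 1, δ > 0 with 2βδ ≤ 4β, and ε_P ∈ (0, 1/2) with 300·n·ε_P ≤ k·exp(−2βδ). Let P be a real polynomial with P(x) ≥ 0 and |P(x) − (1/4)·exp(2βx)| ≤ ε_P for all x ∈ [−1, 0], and |P(x)| ≤ 1 on [−1,1]. Let u ∈ ℝⁿ, S ⊆ [n] with |S| = k, and real numbers ũ_i (i ∈ S) with 0 ≤ ũ_i − u_i ≤ 2βδ for all i ∈ S; set ũ* = min_{i ∈ S} ũ_i and assume 0 ≤ ũ* − u_i ≤ 4β for all i ∉ S. Let W = (n − k)·exp(ũ*) + Σ_{i ∈ S} exp(ũ_i), E = Σ_{i=1}^n exp(u_i), and N = Σ_{i ∈ S} P((u_i − ũ_i)/(4β))²·exp(ũ_i)/W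 + Σ_{i ∉ S} P((u_i − ũ*)/(4β))²·exp(ũ*)/W. Define the probability distribution q ∈ Δ_n by q_i = P((u_i − ũ_i)/(4β))²·exp(ũ_i)/(W·N) for i ∈ S and q_i = P((u_i − ũ*)/(4β))²·exp(ũ*)/(W·N) for i ∉ S, and let g ∈ Δ_n be the Gibbs distribution g_i = exp(u_i)/E. Then the total variation distance satisfies d_TV(q, g) = (1/2)·Σ_{i=1}^n |q_i − g_i| ≤ √( 88·n·ε_P·exp(2βδ)/k ). -/
/-!
Write `q ∝ a` and `g ∝ b` with `a i = P(xᵢ)² · exp cᵢ` and `b i = exp uᵢ / 16`, where `cᵢ` is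
`ũᵢ` on `S` and `ũ*` off `S`, and `xᵢ = (uᵢ - cᵢ)/(4β) ∈ [-1, 0]`, so that
`exp uᵢ = exp (4βxᵢ) · exp cᵢ`. Squaring `P ≈ exp(2βx)/4` gives `|a i - b i| ≤ (5/4) ε_P exp cᵢ`;
summing, and using `W ≤ (n/k) ∑_{i ∈ S} exp ũᵢ ≤ (n/k) exp(2βδ) E`, the ℓ¹ distance of `a` and `b`
is at most `20 t ∑ b` with `t = n ε_P exp(2βδ)/k ≤ 1/300`. Normalising moves vectors at ℓ¹
distance `s ∑ b` to total variation distance at most `s/(1 - s)`, and `20t/(1 - 20t) ≤ √(88 t)`.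
-/

open Finset

theorem abs_sq_sub_sq_le_of_abs_le {p e ε : ℝ} (hp : |p| ≤ 1) (he : |e| ≤ 1 / 4)
    (hpe : |p - e| ≤ ε) : |p ^ 2 - e ^ 2| ≤ 5 / 4 * ε := by
  rw [sq_sub_sq, abs_mul, mul_comm]
  calc |p - e| * |p + e| ≤ ε * (1 + 1 / 4) := by
        gcongr
        · exact (abs_nonneg _).trans hpe
        · exact (abs_add_le p e).trans (add_le_add hp he)
    _ = 5 / 4 * ε := by ring

theorem abs_eval_sq_sub_exp_le {P : Polynomial ℝ} {β εP : ℝ} (hβ : 0 ≤ β)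
    (hP1 : ∀ x ∈ Set.Icc (-1 : ℝ) 1, |P.eval x| ≤ 1)
    (hP2 : ∀ x ∈ Set.Icc (-1 : ℝ) 0, |P.eval x - 1 / 4 * Real.exp (2 * β * x)| ≤ εP)
    {x : ℝ} (hx : x ∈ Set.Icc (-1 : ℝ) 0) :
    |P.eval x ^ 2 - Real.exp (4 * β * x) / 16| ≤ 5 / 4 * εP := by
  have hexp : Real.exp (4 * β * x) / 16 = (1 / 4 * Real.exp (2 * β * x)) ^ 2 := by
    rw [mul_pow, ← Real.exp_nat_mul]; ring_nf
  have hexp_le : Real.exp (2 * β * x) ≤ 1 :=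
    Real.exp_le_one_iff.2 (mul_nonpos_of_nonneg_of_nonpos (by positivity) hx.2)
  rw [hexp]
  refine abs_sq_sub_sq_le_of_abs_le (hP1 x ⟨hx.1, hx.2.trans zero_le_one⟩) ?_ (hP2 x hx)
  rw [abs_of_pos (by positivity)]
  linarith

theorem abs_eval_sq_mul_exp_sub_le {P : Polynomial ℝ} {β εP : ℝ} (hβ : 0 < β)
    (hP1 : ∀ x ∈ Set.Icc (-1 : ℝ) 1, |P.eval x| ≤ 1)
    (hP2 : ∀ x ∈ Set.Icc (-1 : ℝ) 0, |P.eval x - 1 / 4 * Real.exp (2 * β * x)| ≤ εP)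
    {w v : ℝ} (hvw : v - w ∈ Set.Icc 0 (4 * β)) :
    |P.eval ((w - v) / (4 * β)) ^ 2 * Real.exp v - Real.exp w / 16|
      ≤ 5 / 4 * εP * Real.exp v := by
  have hx : (w - v) / (4 * β) ∈ Set.Icc (-1 : ℝ) 0 :=
    ⟨by rw [le_div_iff₀ (by positivity)]; linarith [hvw.2],
      div_nonpos_of_nonpos_of_nonneg (by linarith [hvw.1]) (by positivity)⟩
  have hexp : Real.exp w = Real.exp (4 * β * ((w - v) / (4 * β))) * Real.exp v := by
    rw [← Real.exp_add]; congr 1; field_simp; ring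
  rw [hexp, mul_div_right_comm, ← sub_mul, abs_mul, Real.abs_exp]
  exact mul_le_mul_of_nonneg_right (abs_eval_sq_sub_exp_le hβ.le hP1 hP2 hx) (Real.exp_pos v).le

theorem card_compl_mul_add_sum_le {ι : Type*} [Fintype ι] {S : Finset ι} (hS : S.Nonempty)
    {f : ι → ℝ} {m : ℝ} (hm : ∀ i ∈ S, m ≤ f i) :
    ((Fintype.card ι : ℝ) - #S) * m + ∑ i ∈ S, f i ≤ Fintype.card ι / #S * ∑ i ∈ S, f i := by
  have hk : (0 : ℝ) < #S := by exact_mod_cast hS.card_pos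
  have hkn : (#S : ℝ) ≤ Fintype.card ι := by exact_mod_cast S.card_le_univ
  have hkm : (#S : ℝ) * m ≤ ∑ i ∈ S, f i := by
    simpa using S.card_nsmul_le_sum f m hm
  rw [div_mul_eq_mul_div, le_div_iff₀ hk]
  nlinarith

theorem sum_ite_mem_const_eq {ι : Type*} [Fintype ι] [DecidableEq ι] (S : Finset ι)
    (f : ι → ℝ) (y : ℝ) :
    ∑ i, (if i ∈ S then f i else y) = ((Fintype.card ι : ℝ) - #S) * y + ∑ i ∈ S, f i := by
  rw [sum_ite, filter_mem_eq_inter, univ_inter, sum_const, filter_not, filter_mem_eq_inter,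
    univ_inter, card_univ_sdiff, nsmul_eq_mul, Nat.cast_sub S.card_le_univ, add_comm]

theorem sum_exp_ite_inf'_le {ι : Type*} [Fintype ι] [DecidableEq ι] {S : Finset ι}
    (hS : S.Nonempty) {u v : ι → ℝ} {d : ℝ} (hvu : ∀ i ∈ S, v i ≤ u i + d) :
    ∑ i, Real.exp (if i ∈ S then v i else S.inf' hS v)
      ≤ Fintype.card ι / #S * (Real.exp d * ∑ i, Real.exp (u i)) := by
  simp only [apply_ite Real.exp, sum_ite_mem_const_eq]
  refine (card_compl_mul_add_sum_le (f := fun i => Real.exp (v i)) hS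
    fun i hi => Real.exp_le_exp.2 (inf'_le v hi)).trans ?_
  gcongr
  rw [mul_sum]
  refine (sum_le_sum fun i hi => ?_).trans
    (sum_le_sum_of_subset_of_nonneg (subset_univ S) fun i _ _ => by positivity)
  rw [← Real.exp_add]
  exact Real.exp_le_exp.2 (by linarith [hvu i hi])

theorem sum_abs_div_sum_sub_div_sum_le {ι : Type*} [Fintype ι] {a b : ι → ℝ}
    (hb : ∀ i, 0 ≤ b i) (ha : 0 < ∑ i, a i) (hb' : 0 < ∑ i, b i) :
    ∑ i, |a i / ∑ j, a j - b i / ∑ j, b j| ≤ 2 * (∑ i, |a i - b i|) / ∑ i, a i := by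
  set A := ∑ i, a i
  set B := ∑ i, b i
  have hsplit : ∀ i, a i / A - b i / B = (a i - b i) / A + b i / B * ((B - A) / A) := by
    intro i; field_simp; ring
  have hBA : |B - A| ≤ ∑ i, |a i - b i| := by
    rw [← sum_sub_distrib]
    exact (abs_sum_le_sum_abs _ _).trans_eq (sum_congr rfl fun i _ => abs_sub_comm _ _)
  calc ∑ i, |a i / A - b i / B|
      ≤ ∑ i, (|a i - b i| / A + b i / B * (|B - A| / A)) := by
        refine sum_le_sum fun i _ => ?_
        rw [hsplit]
        refine (abs_add_le _ _).trans_eq ?_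
        rw [abs_div, abs_mul, abs_div, abs_div, abs_of_pos ha, abs_of_nonneg (hb i),
          abs_of_pos hb']
    _ = (∑ i, |a i - b i|) / A + |B - A| / A := by
        rw [sum_add_distrib, ← sum_div, ← sum_mul, ← sum_div, div_self hb'.ne', one_mul]
    _ ≤ 2 * (∑ i, |a i - b i|) / A := by
        rw [two_mul, add_div]; gcongr

theorem half_sum_abs_div_sum_sub_div_sum_le {ι : Type*} [Fintype ι] {a b : ι → ℝ} {s : ℝ}
    (hb : ∀ i, 0 ≤ b i) (hb' : 0 < ∑ i, b i) (hs : s < 1)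
    (hab : ∑ i, |a i - b i| ≤ s * ∑ i, b i) :
    1 / 2 * ∑ i, |a i / ∑ j, a j - b i / ∑ j, b j| ≤ s / (1 - s) := by
  have hBA : ∑ i, b i - ∑ i, a i ≤ s * ∑ i, b i := by
    rw [← sum_sub_distrib]
    exact (sum_le_sum fun i _ => (le_abs_self _).trans_eq (abs_sub_comm _ _)).trans hab
  have hs0 : 0 ≤ s :=
    nonneg_of_mul_nonneg_left ((sum_nonneg fun i _ => abs_nonneg _).trans hab) hb'
  have ha : 0 < ∑ i, a i := by nlinarith
  calc 1 / 2 * ∑ i, |a i / ∑ j, a j - b i / ∑ j, b j|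
      ≤ 1 / 2 * (2 * (∑ i, |a i - b i|) / ∑ i, a i) := by
        gcongr; exact sum_abs_div_sum_sub_div_sum_le hb ha hb'
    _ ≤ s / (1 - s) := by
        rw [← mul_div_assoc, ← mul_assoc, div_le_div_iff₀ ha (by linarith)]
        nlinarith [mul_le_mul_of_nonneg_left hBA hs0,
          mul_le_mul_of_nonneg_right hab (sub_nonneg.2 hs.le)]

theorem div_one_sub_le_sqrt {t : ℝ} (ht : 0 ≤ t) (ht' : t ≤ 1 / 300) :
    20 * t / (1 - 20 * t) ≤ Real.sqrt (88 * t) := by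
  apply Real.le_sqrt_of_sq_le
  have hden : (14 : ℝ) / 15 ≤ 1 - 20 * t := by linarith
  have h : 20 * t / (1 - 20 * t) ≤ 150 / 7 * t := by
    rw [div_le_iff₀ (by linarith)]; nlinarith
  calc (20 * t / (1 - 20 * t)) ^ 2 ≤ (150 / 7 * t) ^ 2 := by gcongr
    _ ≤ 88 * t := by nlinarith

theorem stmt14_general (n k : ℕ) (hk : 1 ≤ k)
    (β δ : ℝ) (hβ : 1 ≤ β) (hδ2 : 2 * β * δ ≤ 4 * β)
    (εP : ℝ) (hεP : εP ∈ Set.Ioo (0 : ℝ) (1 / 2))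
    (hεPk : 300 * (n : ℝ) * εP ≤ (k : ℝ) * Real.exp (-(2 * β * δ)))
    (P : Polynomial ℝ)
    (hP1 : ∀ x ∈ Set.Icc (-1 : ℝ) 1, |P.eval x| ≤ 1)
    (hP2 : ∀ x ∈ Set.Icc (-1 : ℝ) 0, |P.eval x - 1 / 4 * Real.exp (2 * β * x)| ≤ εP)
    (u : Fin n → ℝ) (S : Finset (Fin n)) (hS : S.card = k) (hSne : S.Nonempty)
    (ut : Fin n → ℝ) (hut : ∀ i ∈ S, 0 ≤ ut i - u i ∧ ut i - u i ≤ 2 * β * δ)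
    (ustar : ℝ) (hustar : ustar = S.inf' hSne ut)
    (hout : ∀ i ∉ S, 0 ≤ ustar - u i ∧ ustar - u i ≤ 4 * β)
    (W : ℝ) (hW : W = ((n : ℝ) - k) * Real.exp ustar + ∑ i ∈ S, Real.exp (ut i))
    (E : ℝ) (hE : E = ∑ i, Real.exp (u i))
    (N : ℝ) (hN : N = (∑ i ∈ S, (P.eval ((u i - ut i) / (4 * β))) ^ 2 * Real.exp (ut i) / W)
      + ∑ i ∈ Sᶜ, (P.eval ((u i - ustar) / (4 * β))) ^ 2 * Real.exp ustar / W)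
    (q g : Fin n → ℝ)
    (hq : ∀ i, q i = if i ∈ S then
        (P.eval ((u i - ut i) / (4 * β))) ^ 2 * Real.exp (ut i) / (W * N)
      else (P.eval ((u i - ustar) / (4 * β))) ^ 2 * Real.exp ustar / (W * N))
    (hg : ∀ i, g i = Real.exp (u i) / E) :
    1 / 2 * ∑ i, |q i - g i| ≤ Real.sqrt (88 * n * εP * Real.exp (2 * β * δ) / k) := by
  obtain ⟨hεP0, -⟩ := hεP
  subst hustar
  have huniv : (univ : Finset (Fin n)).Nonempty := hSne.mono (subset_univ S)
  set c : Fin n → ℝ := fun i => if i ∈ S then ut i else S.inf' hSne ut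
  set a : Fin n → ℝ := fun i => P.eval ((u i - c i) / (4 * β)) ^ 2 * Real.exp (c i)
  set b : Fin n → ℝ := fun i => Real.exp (u i) / 16
  set t := (n : ℝ) * εP * Real.exp (2 * β * δ) / k
  have hqa : ∀ i, q i = a i / ∑ j, a j := by
    have hW0 : W ≠ 0 := by
      have hWc : W = ∑ i, Real.exp (c i) := by
        simp only [c, apply_ite Real.exp, sum_ite_mem_const_eq, Fintype.card_fin, hS, hW]
      exact hWc ▸ (sum_pos (fun i _ => by positivity) huniv).ne'
    have hWN : W * N = ∑ i, a i := by
      rw [hN, mul_add, mul_sum, mul_sum, ← sum_add_sum_compl S a]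
      congr 1 <;> refine sum_congr rfl fun i hi => ?_ <;>
        simp_all [a, c, mul_div_cancel₀]
    intro i; rw [hq, ← hWN]; by_cases hi : i ∈ S <;> simp [a, c, hi]
  have hgb : ∀ i, g i = b i / ∑ j, b j := by
    intro i; rw [hg, ← sum_div, ← hE]; simp only [b]; field_simp
  have hab : ∑ i, |a i - b i| ≤ 20 * t * ∑ i, b i := by
    have hc : ∀ i, c i - u i ∈ Set.Icc 0 (4 * β) := by
      intro i
      by_cases hi : i ∈ S <;> simp only [c, hi, if_true, if_false]
      exacts [⟨(hut i hi).1, (hut i hi).2.trans hδ2⟩, hout i hi]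
    calc ∑ i, |a i - b i| ≤ ∑ i, 5 / 4 * εP * Real.exp (c i) :=
          sum_le_sum fun i _ => abs_eval_sq_mul_exp_sub_le (by linarith) hP1 hP2 (hc i)
      _ ≤ 5 / 4 * εP * (n / k * (Real.exp (2 * β * δ) * E)) := by
          rw [← mul_sum]
          gcongr
          simpa [hS, hE] using sum_exp_ite_inf'_le hSne fun i hi => by linarith [(hut i hi).2]
      _ = 20 * t * ∑ i, b i := by
          rw [← sum_div, ← hE]; simp only [t]; field_simp; ring
  have ht : t ≤ 1 / 300 := by
    rw [Real.exp_neg, ← div_eq_mul_inv, le_div_iff₀ (Real.exp_pos _)] at hεPk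
    rw [div_le_iff₀ (by positivity)]
    linarith
  simp only [hqa, hgb]
  calc _ ≤ 20 * t / (1 - 20 * t) :=
        half_sum_abs_div_sum_sub_div_sum_le (fun i => by positivity)
          (sum_pos (fun i _ => by positivity) huniv) (by linarith) hab
    _ ≤ _ := by
        convert div_one_sub_le_sqrt (by positivity) ht using 2; ring

/-- Total variation error of the quantum multi-Gibbs sampler's output distribution:
the measurement distribution `q` of the normalized post-selected state is
`√(88·n·ε_P·exp(2βδ)/k)`-close in total variation distance to the Gibbs
distribution `g_i = exp(u_i)/E`. -/
theorem stmt14 (n k : ℕ) (hk : 1 ≤ k) (hkn : k ≤ n)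
    (β δ : ℝ) (hβ : 1 ≤ β) (hδ : 0 < δ) (hδ2 : 2 * β * δ ≤ 4 * β)
    (εP : ℝ) (hεP : εP ∈ Set.Ioo (0 : ℝ) (1 / 2))
    (hεPk : 300 * (n : ℝ) * εP ≤ (k : ℝ) * Real.exp (-(2 * β * δ)))
    (P : Polynomial ℝ)
    (hP0 : ∀ x ∈ Set.Icc (-1 : ℝ) 0, 0 ≤ P.eval x)
    (hP1 : ∀ x ∈ Set.Icc (-1 : ℝ) 1, |P.eval x| ≤ 1)
    (hP2 : ∀ x ∈ Set.Icc (-1 : ℝ) 0, |P.eval x - 1 / 4 * Real.exp (2 * β * x)| ≤ εP)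
    (u : Fin n → ℝ) (S : Finset (Fin n)) (hS : S.card = k) (hSne : S.Nonempty)
    (ut : Fin n → ℝ) (hut : ∀ i ∈ S, 0 ≤ ut i - u i ∧ ut i - u i ≤ 2 * β * δ)
    (ustar : ℝ) (hustar : ustar = S.inf' hSne ut)
    (hout : ∀ i ∉ S, 0 ≤ ustar - u i ∧ ustar - u i ≤ 4 * β)
    (W : ℝ) (hW : W = ((n : ℝ) - k) * Real.exp ustar + ∑ i ∈ S, Real.exp (ut i))
    (E : ℝ) (hE : E = ∑ i, Real.exp (u i))
    (N : ℝ) (hN : N = (∑ i ∈ S, (P.eval ((u i - ut i) / (4 * β))) ^ 2 * Real.exp (ut i) / W)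
      + ∑ i ∈ Sᶜ, (P.eval ((u i - ustar) / (4 * β))) ^ 2 * Real.exp ustar / W)
    (q g : Fin n → ℝ)
    (hq : ∀ i, q i = if i ∈ S then
        (P.eval ((u i - ut i) / (4 * β))) ^ 2 * Real.exp (ut i) / (W * N)
      else (P.eval ((u i - ustar) / (4 * β))) ^ 2 * Real.exp ustar / (W * N))
    (hg : ∀ i, g i = Real.exp (u i) / E) :
    1 / 2 * ∑ i, |q i - g i| ≤ Real.sqrt (88 * n * εP * Real.exp (2 * β * δ) / k) :=
  stmt14_general n k hk β δ hβ hδ2 εP hεP hεPk P hP1 hP2 u S hS hSne ut hut ustar hustar hout W hW E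
    hE N hN q g hq hg
end
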